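/- Let X be a topological space, A a connected subspace of X, and suppose X \ A is partitioned into two disjoint open sets M₁ and M₂ of X \ A. If every point of A lies in the closure of M₁ ∪ M₂, and A is connected, then A cannot be partitioned into two nonempty sets A₁, A₂ with A₁ ⊆ closure(M₁) \ closure(M₂) and A₂ ⊆ closure(M₂) \ closure(M₁); i.e., some point of A lies in closure(M₁) ∩ closure(M₂). -/
import Mathlib

/-- If a connected set `A` is covered by the closures of two disjoint sets `M₁, M₂`
partitioning `X \ A` and open in the subspace `X \ A`, and `A` meets both closures,
then some point of `A` lies in both closures. -/
theorem stmt_7 {X : Type*} [TopologicalSpace X] (A M₁ M₂ : Set X)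
    (hA : IsConnected A)
    (hdisj : Disjoint M₁ M₂) (hpart : M₁ ∪ M₂ = Aᶜ)
    (hopen1 : IsOpen (Subtype.val ⁻¹' M₁ : Set (Aᶜ : Set X)))
    (hopen2 : IsOpen (Subtype.val ⁻¹' M₂ : Set (Aᶜ : Set X)))
    (hcover : A ⊆ closure M₁ ∪ closure M₂)
    (h1 : (A ∩ closure M₁).Nonempty) (h2 : (A ∩ closure M₂).Nonempty) :
    (A ∩ (closure M₁ ∩ closure M₂)).Nonempty := by
  by_contra hempty
  rw [Set.not_nonempty_iff_eq_empty] at hempty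
  have hU : (A ∩ (closure M₁)ᶜ).Nonempty := by
    obtain ⟨x, hxA, hx2⟩ := h2
    refine ⟨x, hxA, fun hx1 => ?_⟩
    exact absurd (Set.eq_empty_iff_forall_notMem.mp hempty x ⟨hxA, hx1, hx2⟩) (fun h => h)
  have hV : (A ∩ (closure M₂)ᶜ).Nonempty := by
    obtain ⟨x, hxA, hx1⟩ := h1
    refine ⟨x, hxA, fun hx2 => ?_⟩
    exact absurd (Set.eq_empty_iff_forall_notMem.mp hempty x ⟨hxA, hx1, hx2⟩) (fun h => h)
  have hsub : A ⊆ (closure M₁)ᶜ ∪ (closure M₂)ᶜ := by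
    intro x hxA
    rcases hcover hxA with h | h
    · right
      exact fun hx2 => Set.eq_empty_iff_forall_notMem.mp hempty x ⟨hxA, h, hx2⟩
    · left
      exact fun hx1 => Set.eq_empty_iff_forall_notMem.mp hempty x ⟨hxA, hx1, h⟩
  obtain ⟨x, hxA, hx1, hx2⟩ := hA.isPreconnected _ _ isClosed_closure.isOpen_compl
    isClosed_closure.isOpen_compl hsub hU hV
  exact (hcover hxA).elim hx1 hx2
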